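/- Every weakly Mathias n-generic set G (n ≥ 3) is hyperimmune relative to ∅^(n−1); that is, no function computable in ∅^(n−1) dominates the principal function of G. -/

import Mathlib

open Classical

namespace MathiasGenerics

/-- Codes for oracle partial recursive functions. -/
inductive OCode : Type
  | zero : OCode
  | succ : OCode
  | left : OCode
  | right : OCode
  | oracle : OCode
  | pair : OCode → OCode → OCode
  | comp : OCode → OCode → OCode
  | prec : OCode → OCode → OCode
  | rfind' : OCode → OCode

/-- Evaluation of an oracle code relative to an oracle `g`. -/
def evalo (g : ℕ →. ℕ) : OCode → ℕ →. ℕ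
  | .zero => fun _ => Part.some 0
  | .succ => fun n => Part.some (n + 1)
  | .left => fun n => Part.some n.unpair.1
  | .right => fun n => Part.some n.unpair.2
  | .oracle => g
  | .pair cf cg => fun n => Nat.pair <$> evalo g cf n <*> evalo g cg n
  | .comp cf cg => fun n => evalo g cg n >>= evalo g cf
  | .prec cf cg =>
    Nat.unpaired fun a n =>
      n.rec (evalo g cf a) fun y IH => do
        let i ← IH
        evalo g cg (Nat.pair a (Nat.pair y i))
  | .rfind' cf =>
    Nat.unpaired fun a m =>
      (Nat.rfind fun n => (fun m => m = 0) <$> evalo g cf (Nat.pair a (n + m))).map (· + m)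

/-- An effective numbering of oracle codes. -/
def encodeOC : OCode → ℕ
  | .zero => 0
  | .succ => 1
  | .left => 2
  | .right => 3
  | .oracle => 4
  | .pair a b => 4 * Nat.pair (encodeOC a) (encodeOC b) + 5
  | .comp a b => 4 * Nat.pair (encodeOC a) (encodeOC b) + 6
  | .prec a b => 4 * Nat.pair (encodeOC a) (encodeOC b) + 7
  | .rfind' a => 4 * encodeOC a + 8

noncomputable def decodeOC (n : ℕ) : OCode :=
  if h : ∃ c, encodeOC c = n then h.choose else OCode.zero

/-- Characteristic function of a set of naturals. -/
noncomputable def χ (A : Set ℕ) : ℕ → ℕ := fun n => if n ∈ A then 1 else 0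

/-- The characteristic function viewed as a partial function. -/
noncomputable def χp (A : Set ℕ) : ℕ →. ℕ := fun n => Part.some (χ A n)

/-- `f` is partial recursive in the oracle `g`. -/
def PartRecIn (g : ℕ →. ℕ) (f : ℕ →. ℕ) : Prop := ∃ c : OCode, ∀ n, evalo g c n = f n

/-- `f` (total) is recursive in the set `B`. -/
def FunRecIn (B : Set ℕ) (f : ℕ → ℕ) : Prop := PartRecIn (χp B) (fun n => Part.some (f n))

/-- Turing reducibility between sets of naturals. -/
def TR (A B : Set ℕ) : Prop := PartRecIn (χp B) (χp A)

/-- Turing equivalence. -/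
def TE (A B : Set ℕ) : Prop := TR A B ∧ TR B A

/-- The Turing jump of a set. -/
noncomputable def jump (A : Set ℕ) : Set ℕ :=
  {e | ∃ c : OCode, encodeOC c = e ∧ (evalo (χp A) c e).Dom}

/-- Iterated Turing jump. -/
noncomputable def jumpIter (A : Set ℕ) : ℕ → Set ℕ
  | 0 => A
  | n + 1 => jump (jumpIter A n)

/-- `∅^(n)`. -/
noncomputable def emptyJump (n : ℕ) : Set ℕ := jumpIter ∅ n

/-- Effective join (recursive join) of two sets. -/
def join (A B : Set ℕ) : Set ℕ :=
  {n | (n % 2 = 0 ∧ n / 2 ∈ A) ∨ (n % 2 = 1 ∧ n / 2 ∈ B)}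

/-- `S` is computably enumerable in `B`. -/
def CeIn (B : Set ℕ) (S : Set ℕ) : Prop :=
  ∃ c : OCode, S = {n | (evalo (χp B) c n).Dom}

/-- `S` is `Σ⁰ₙ`. -/
noncomputable def Sigma0 : ℕ → Set ℕ → Prop
  | 0 => fun S => TR S ∅
  | n + 1 => fun S => CeIn (emptyJump n) S

/-- `S` is `Π⁰ₙ`. -/
noncomputable def Pi0 (n : ℕ) (S : Set ℕ) : Prop := Sigma0 n Sᶜ

/-- `S` is `Δ⁰ₙ`. -/
noncomputable def Delta0 (n : ℕ) (S : Set ℕ) : Prop := Sigma0 n S ∧ Pi0 n S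

/-- A set is computable iff Turing reducible to `∅`. -/
def ComputableSet (S : Set ℕ) : Prop := TR S ∅

/-! ### Mathias conditions, coded by naturals

A (code of a) pre-condition is a pair `⟨d, e⟩` where `d` canonically codes the
finite set `D` and `e` is a code of a total `{0,1}`-valued computable function
whose set of `1`s is `E`. -/

/-- The finite part `D` of the coded condition `p`. -/
def condD (p : ℕ) : Finset ℕ := Denumerable.ofNat (Finset ℕ) p.unpair.1

/-- The infinite part `E` of the coded condition `p`. -/
noncomputable def condE (p : ℕ) : Set ℕ :=
  {x | evalo (χp ∅) (decodeOC p.unpair.2) x = Part.some 1}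

/-- The function computing `E` is total and `{0,1}`-valued (so `E` is computable). -/
noncomputable def condETotal (p : ℕ) : Prop :=
  ∀ x, evalo (χp ∅) (decodeOC p.unpair.2) x = Part.some 0 ∨
    evalo (χp ∅) (decodeOC p.unpair.2) x = Part.some 1

/-- `p` codes a Mathias pre-condition `(D, E)`: `E` computable and `max D < min E`. -/
noncomputable def IsPreCond (p : ℕ) : Prop :=
  condETotal p ∧ ∀ d ∈ condD p, ∀ x ∈ condE p, d < x

/-- `p` codes a Mathias condition: a pre-condition with `E` infinite. -/
noncomputable def IsCond (p : ℕ) : Prop := IsPreCond p ∧ (condE p).Infinite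

/-- `q` extends `p`. -/
noncomputable def Ext (q p : ℕ) : Prop :=
  condD p ⊆ condD q ∧ ↑(condD q) ⊆ ↑(condD p) ∪ condE p ∧ condE q ⊆ condE p

/-- The set `A` satisfies the coded condition `p`. -/
noncomputable def Sat (A : Set ℕ) (p : ℕ) : Prop :=
  ↑(condD p) ⊆ A ∧ A ⊆ ↑(condD p) ∪ condE p

/-- `A` meets the set of coded conditions `C`. -/
noncomputable def Meets (A : Set ℕ) (C : Set ℕ) : Prop := ∃ p ∈ C, Sat A p

/-- `A` avoids `C`: it satisfies a condition with no extension in `C`. -/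
noncomputable def Avoids (A : Set ℕ) (C : Set ℕ) : Prop :=
  ∃ p, IsCond p ∧ Sat A p ∧ ∀ q, IsCond q → Ext q p → q ∉ C

/-- `C` is a set of conditions. -/
noncomputable def CondSet (C : Set ℕ) : Prop := ∀ p ∈ C, IsCond p

/-- `C` is a set of pre-conditions. -/
noncomputable def PreCondSet (C : Set ℕ) : Prop := ∀ p ∈ C, IsPreCond p

/-- `G` is Mathias `n`-generic. -/
noncomputable def MGen (n : ℕ) (G : Set ℕ) : Prop :=
  ∀ C : Set ℕ, Sigma0 n C → CondSet C → Meets G C ∨ Avoids G C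

/-- `C` is a dense set of conditions. -/
noncomputable def DenseCond (C : Set ℕ) : Prop := ∀ p, IsCond p → ∃ q ∈ C, Ext q p

/-- `G` is weakly Mathias `n`-generic. -/
noncomputable def WMGen (n : ℕ) (G : Set ℕ) : Prop :=
  ∀ C : Set ℕ, Sigma0 n C → CondSet C → DenseCond C → Meets G C

/-- `G` is strongly Mathias `n`-generic: for every `Σ⁰ₙ` set `C` of pre-conditions,
either `G` meets some condition in `C` or `G` meets the set of conditions not
extended by any condition in `C`. -/
noncomputable def SMGen (n : ℕ) (G : Set ℕ) : Prop :=
  ∀ C : Set ℕ, Sigma0 n C → PreCondSet C →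
    (∃ p ∈ C, IsCond p ∧ Sat G p) ∨
    (∃ p, IsCond p ∧ Sat G p ∧ ∀ q ∈ C, IsCond q → ¬ Ext q p)

/-- `A` is hyperimmune relative to `X`: `A` is infinite and its principal function
is not dominated by any `X`-recursive function. -/
noncomputable def HypImmRel (A X : Set ℕ) : Prop :=
  A.Infinite ∧ ∀ f : ℕ → ℕ, FunRecIn X f → ∃ n, f n < Nat.nth (· ∈ A) n

/-- `A` is bi-immune: neither `A` nor its complement has an infinite computable subset. -/
def BiImmune (A : Set ℕ) : Prop :=
  (∀ S : Set ℕ, ComputableSet S → S.Infinite → ¬ S ⊆ A) ∧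
    (∀ S : Set ℕ, ComputableSet S → S.Infinite → ¬ S ⊆ Aᶜ)

/-! ### Cohen forcing -/

/-- The binary string `σ` is an initial segment of (the characteristic function of) `A`. -/
def StrSat (A : Set ℕ) (σ : List Bool) : Prop :=
  ∀ i : Fin σ.length, (σ.get i = true ↔ (i : ℕ) ∈ A)

/-- A set of binary strings is `Σ⁰ₙ` (via the canonical coding). -/
noncomputable def Sigma0Str (n : ℕ) (C : Set (List Bool)) : Prop :=
  Sigma0 n (Encodable.encode '' C)

/-- `A` is Cohen `n`-generic. -/
noncomputable def CGen (n : ℕ) (A : Set ℕ) : Prop :=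
  ∀ C : Set (List Bool), Sigma0Str n C →
    (∃ σ ∈ C, StrSat A σ) ∨ (∃ σ, StrSat A σ ∧ ∀ τ ∈ C, ¬ σ <+: τ)

/-! ### Arithmetical formulas in one free set variable, and Mathias forcing -/

/-- Numeric terms: de Bruijn variables and numerals. -/
inductive Trm : Type
  | var : ℕ → Trm
  | cst : ℕ → Trm

/-- Value of a term under a valuation. -/
def tval (ρ : ℕ → ℕ) : Trm → ℕ
  | .var i => ρ i
  | .cst n => n

/-- Prenex formulas in one free set variable `X`.  The quantifier-free matrix is
given in disjunctive normal form: a disjunct `(P, N)` asserts `t ∈ X` for `t ∈ P`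
and `t ∉ X` for `t ∈ N`. -/
inductive Form : Type
  | dnf : List (List Trm × List Trm) → Form
  | ex : Form → Form
  | all : Form → Form

/-- Push a value onto a de Bruijn valuation. -/
def push (a : ℕ) (ρ : ℕ → ℕ) : ℕ → ℕ
  | 0 => a
  | i + 1 => ρ i

/-- Truth of a formula at the set `A` under the valuation `ρ`. -/
def FEval (ρ : ℕ → ℕ) (A : Set ℕ) : Form → Prop
  | .dnf ds => ∃ d ∈ ds, (∀ t ∈ d.1, tval ρ t ∈ A) ∧ (∀ t ∈ d.2, tval ρ t ∉ A)
  | .ex φ => ∃ a, FEval (push a ρ) A φ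
  | .all φ => ∀ a, FEval (push a ρ) A φ

/-- Strong Mathias forcing of `φ(G)` by the coded condition `p`, under valuation `ρ`. -/
noncomputable def Forces (p : ℕ) (ρ : ℕ → ℕ) : Form → Prop
  | .dnf ds => ∃ d ∈ ds, (∀ t ∈ d.1, tval ρ t ∈ condD p) ∧
      (∀ t ∈ d.2, tval ρ t ∉ (↑(condD p) ∪ condE p : Set ℕ))
  | .ex φ => ∃ a, Forces p (push a ρ) φ
  | .all φ => ∀ q, IsCond q → Ext q p → ∀ a, ∃ r, IsCond r ∧ Ext r q ∧ Forces r (push a ρ) φ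

/-- Classification of prenex formulas: `lev true n φ` means `φ` is `Σ⁰ₙ`,
`lev false n φ` means `φ` is `Π⁰ₙ`. -/
def lev : Bool → ℕ → Form → Prop
  | _, 0, .dnf _ => True
  | true, n + 1, .ex φ => lev false n φ
  | false, n + 1, .all φ => lev true n φ
  | _, _, _ => False

/-- `φ` is a `Σ⁰ₙ` formula. -/
def IsSig (n : ℕ) (φ : Form) : Prop := lev true n φ

/-- `φ` is a `Π⁰ₙ` formula. -/
def IsPiF (n : ℕ) (φ : Form) : Prop := lev false n φ

/-- All free variables of `φ` are `< k`. -/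
def ClosedB : ℕ → Form → Prop
  | k, .dnf ds => ∀ d ∈ ds, ∀ t ∈ d.1 ++ d.2, ∀ i, t = Trm.var i → i < k
  | k, .ex φ => ClosedB (k + 1) φ
  | k, .all φ => ClosedB (k + 1) φ

/-- `φ` has no free number variables (only the free set variable `X`). -/
def ClosedF (φ : Form) : Prop := ClosedB 0 φ

/-- The zero valuation. -/
def ρ0 : ℕ → ℕ := fun _ => 0

/-- Numbering of lists. -/
def encList {α : Type} (f : α → ℕ) : List α → ℕ
  | [] => 0
  | a :: l => Nat.pair (f a) (encList f l) + 1

/-- Numbering of terms. -/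
def encTrm : Trm → ℕ
  | .var i => 2 * i
  | .cst n => 2 * n + 1

/-- Numbering of formulas. -/
def encForm : Form → ℕ
  | .dnf ds => 3 * encList (fun d => Nat.pair (encList encTrm d.1) (encList encTrm d.2)) ds
  | .ex φ => 3 * encForm φ + 1
  | .all φ => 3 * encForm φ + 2

end MathiasGenerics

/-!
Fix an `∅⁽ⁿ⁻¹⁾`-computable `F`. The conditions `(D, E)` with `D` nonempty and
`F (|D| - 1) < max D` are dense: extend `(D, E)` by an element of `E` above `F |D|`. A set `G`
satisfying such a condition meets `[0, max D]` exactly in `D`, because `max D < min E`; so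
`max D` is the `(|D| - 1)`-th element of `G` and the principal function of `G` exceeds `F` there.
Being a condition is decidable in `∅″`: totality of `E` and `max D < min E` are `Π⁰₁`, and for
total `E` the infinitude of `E` is `Π⁰₁(∅′)`. As `n ≥ 3`, the dense set is computable in `∅⁽ⁿ⁻¹⁾`,
hence `Σ⁰ₙ`, and a weakly `n`-generic `G` meets it. Constant functions `F` show that `G` is
infinite.
-/

namespace MathiasGenerics

/-! ### Oracle computability -/

theorem encodeOC_injective : Function.Injective encodeOC := by
  intro c
  induction c with
  | pair a b iha ihb | comp a b iha ihb | prec a b iha ihb =>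
    intro d h
    cases d <;> simp only [encodeOC] at h <;> try omega
    all_goals
      obtain ⟨h1, h2⟩ :=
        Nat.pair_eq_pair.1 (Nat.eq_of_mul_eq_mul_left four_pos (Nat.add_right_cancel h))
      rw [iha h1, ihb h2]
  | rfind' a iha =>
    intro d h
    cases d <;> simp only [encodeOC] at h <;> try omega
    rw [iha (Nat.eq_of_mul_eq_mul_left four_pos (Nat.add_right_cancel h))]
  | _ => intro d h; cases d <;> simp only [encodeOC] at h <;> first | rfl | omega

theorem encodeOC_surjective : Function.Surjective encodeOC := by
  intro n
  induction n using Nat.strong_induction_on with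
  | _ n ih =>
    match n with
    | 0 => exact ⟨.zero, rfl⟩
    | 1 => exact ⟨.succ, rfl⟩
    | 2 => exact ⟨.left, rfl⟩
    | 3 => exact ⟨.right, rfl⟩
    | 4 => exact ⟨.oracle, rfl⟩
    | n + 5 =>
      have hq : n / 4 < n + 5 := by omega
      obtain ⟨a, ha⟩ := ih _ ((Nat.unpair_left_le _).trans_lt hq)
      obtain ⟨b, hb⟩ := ih _ ((Nat.unpair_right_le _).trans_lt hq)
      obtain ⟨r, hr⟩ := ih _ hq
      have h4 : n % 4 < 4 := Nat.mod_lt _ (by norm_num)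
      interval_cases h : n % 4
      · exact ⟨.pair a b, by simp only [encodeOC, ha, hb, Nat.pair_unpair]; omega⟩
      · exact ⟨.comp a b, by simp only [encodeOC, ha, hb, Nat.pair_unpair]; omega⟩
      · exact ⟨.prec a b, by simp only [encodeOC, ha, hb, Nat.pair_unpair]; omega⟩
      · exact ⟨.rfind' r, by simp only [encodeOC, hr]; omega⟩

@[simp] theorem decodeOC_encodeOC (c : OCode) : decodeOC (encodeOC c) = c := by
  have h : ∃ d, encodeOC d = encodeOC c := ⟨c, rfl⟩
  rw [decodeOC, dif_pos h]
  exact encodeOC_injective h.choose_spec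

@[simp] theorem encodeOC_decodeOC (n : ℕ) : encodeOC (decodeOC n) = n := by
  obtain ⟨c, rfl⟩ := encodeOC_surjective n
  rw [decodeOC_encodeOC]

def ofCode : Nat.Partrec.Code → OCode
  | .zero => .zero
  | .succ => .succ
  | .left => .left
  | .right => .right
  | .pair a b => .pair (ofCode a) (ofCode b)
  | .comp a b => .comp (ofCode a) (ofCode b)
  | .prec a b => .prec (ofCode a) (ofCode b)
  | .rfind' a => .rfind' (ofCode a)

theorem evalo_ofCode (g : ℕ →. ℕ) (c : Nat.Partrec.Code) : evalo g (ofCode c) = c.eval := by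
  induction c with
  | zero | succ | left | right => rfl
  | pair a b iha ihb | comp a b iha ihb | prec a b iha ihb =>
    simp only [ofCode, evalo, Nat.Partrec.Code.eval, iha, ihb]; rfl
  | rfind' a iha => simp only [ofCode, evalo, Nat.Partrec.Code.eval, iha]; rfl

def substOC (d : OCode) : OCode → OCode
  | .zero => .zero
  | .succ => .succ
  | .left => .left
  | .right => .right
  | .oracle => d
  | .pair a b => .pair (substOC d a) (substOC d b)
  | .comp a b => .comp (substOC d a) (substOC d b)
  | .prec a b => .prec (substOC d a) (substOC d b)
  | .rfind' a => .rfind' (substOC d a)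

theorem evalo_substOC (h : ℕ →. ℕ) (d c : OCode) :
    evalo h (substOC d c) = evalo (evalo h d) c := by
  induction c with
  | zero | succ | left | right | oracle => rfl
  | pair a b iha ihb | comp a b iha ihb | prec a b iha ihb =>
    simp only [substOC, evalo, iha, ihb]; rfl
  | rfind' a iha => simp only [substOC, evalo, iha]; rfl

namespace PartRecIn

variable {g h f : ℕ →. ℕ}

theorem of_partrec (hf : Nat.Partrec f) : PartRecIn g f := by
  obtain ⟨c, rfl⟩ := Nat.Partrec.Code.exists_code.1 hf
  exact ⟨ofCode c, fun n => by rw [evalo_ofCode]⟩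

theorem comp (hf : PartRecIn g f) (hh : PartRecIn g h) : PartRecIn g (fun n => h n >>= f) := by
  obtain ⟨cf, hcf⟩ := hf
  obtain ⟨ch, hch⟩ := hh
  exact ⟨.comp cf ch, fun n => by simp only [evalo, hch, funext hcf]⟩

theorem pair (hf : PartRecIn g f) (hh : PartRecIn g h) :
    PartRecIn g (fun n => Nat.pair <$> f n <*> h n) := by
  obtain ⟨cf, hcf⟩ := hf
  obtain ⟨ch, hch⟩ := hh
  exact ⟨.pair cf ch, fun n => by simp only [evalo, hcf, hch]⟩

theorem trans (hf : PartRecIn g f) (hg : PartRecIn h g) : PartRecIn h f := by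
  obtain ⟨c, hc⟩ := hf
  obtain ⟨d, hd⟩ := hg
  exact ⟨substOC d c, fun n => by rw [evalo_substOC, funext hd, hc]⟩

end PartRecIn

namespace FunRecIn

variable {B C : Set ℕ} {F H : ℕ → ℕ}

theorem of_eq (hF : FunRecIn B F) (h : ∀ n, F n = H n) : FunRecIn B H :=
  funext h ▸ hF

theorem of_primrec (hF : Primrec F) : FunRecIn B F :=
  PartRecIn.of_partrec (Nat.Partrec.of_primrec (Primrec.nat_iff.1 hF))

theorem comp (hF : FunRecIn B F) (hH : FunRecIn B H) : FunRecIn B (fun n => F (H n)) := by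
  unfold FunRecIn; simpa using PartRecIn.comp hF hH

theorem comp_primrec (hF : FunRecIn B F) (hH : Primrec H) : FunRecIn B (fun n => F (H n)) :=
  hF.comp (of_primrec hH)

theorem pair (hF : FunRecIn B F) (hH : FunRecIn B H) :
    FunRecIn B (fun n => Nat.pair (F n) (H n)) := by
  unfold FunRecIn; simpa [Seq.seq] using PartRecIn.pair hF hH

theorem comp₂ {φ : ℕ → ℕ → ℕ} (hφ : Primrec₂ φ) (hF : FunRecIn B F) (hH : FunRecIn B H) :
    FunRecIn B (fun n => φ (F n) (H n)) := by
  have hφ' : Primrec (fun m : ℕ => φ m.unpair.1 m.unpair.2) :=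
    hφ.comp (Primrec.fst.comp Primrec.unpair) (Primrec.snd.comp Primrec.unpair)
  simpa using (of_primrec hφ').comp (hF.pair hH)

theorem of_tr (hF : FunRecIn B F) (hBC : TR B C) : FunRecIn C F :=
  PartRecIn.trans hF hBC

end FunRecIn

def DecidableIn (B : Set ℕ) (P : ℕ → Prop) : Prop := FunRecIn B (fun n => if P n then 1 else 0)

theorem decidableIn_mem_iff {A B : Set ℕ} : DecidableIn B (· ∈ A) ↔ TR A B := Iff.rfl

namespace DecidableIn

variable {B C : Set ℕ} {P Q : ℕ → Prop}

theorem of_iff (hP : DecidableIn B P) (h : ∀ n, P n ↔ Q n) : DecidableIn B Q :=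
  funext (fun n => propext (h n)) ▸ hP

theorem of_primrecPred (hP : PrimrecPred P) : DecidableIn B P :=
  FunRecIn.of_primrec (Primrec.ite hP (Primrec.const 1) (Primrec.const 0))

theorem comp_primrec (hP : DecidableIn B P) {f : ℕ → ℕ} (hf : Primrec f) :
    DecidableIn B (fun n => P (f n)) :=
  FunRecIn.comp_primrec hP hf

theorem of_tr (hP : DecidableIn B P) (hBC : TR B C) : DecidableIn C P :=
  FunRecIn.of_tr hP hBC

theorem not (hP : DecidableIn B P) : DecidableIn B (fun n => ¬ P n) := by
  refine ((FunRecIn.of_primrec (Primrec.nat_sub.comp (Primrec.const 1) Primrec.id)).comp hP).of_eq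
    fun n => ?_
  by_cases h : P n <;> simp [h]

theorem and (hP : DecidableIn B P) (hQ : DecidableIn B Q) : DecidableIn B (fun n => P n ∧ Q n) := by
  refine (FunRecIn.comp₂ Primrec.nat_mul hP hQ).of_eq fun n => ?_
  by_cases h : P n <;> simp [h]

theorem or (hP : DecidableIn B P) (hQ : DecidableIn B Q) : DecidableIn B (fun n => P n ∨ Q n) :=
  (hP.not.and hQ.not).not.of_iff fun _ => by tauto

theorem imp (hP : DecidableIn B P) (hQ : DecidableIn B Q) : DecidableIn B (fun n => P n → Q n) :=
  (hP.not.or hQ).of_iff fun _ => imp_iff_not_or.symm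

theorem rel {R : ℕ → ℕ → Prop} (hR : PrimrecRel R) {F H : ℕ → ℕ} (hF : FunRecIn B F)
    (hH : FunRecIn B H) : DecidableIn B (fun n => R (F n) (H n)) :=
  FunRecIn.comp₂ (φ := fun a b => if R a b then 1 else 0)
    (Primrec.ite hR (Primrec.const 1) (Primrec.const 0)) hF hH

end DecidableIn

/-! ### The jump -/

theorem TR.refl (A : Set ℕ) : TR A A := ⟨.oracle, fun _ => rfl⟩

theorem TR.trans {A B C : Set ℕ} (hAB : TR A B) (hBC : TR B C) : TR A C := PartRecIn.trans hAB hBC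

def constO : ℕ → OCode
  | 0 => .zero
  | n + 1 => .comp .succ (constO n)

theorem evalo_constO (g : ℕ →. ℕ) (x y : ℕ) : evalo g (constO x) y = Part.some x := by
  induction x with
  | zero => rfl
  | succ n ih => simp [constO, evalo, ih]

def PrimrecCode (f : ℕ → OCode) : Prop := Primrec (fun n => encodeOC (f n))

namespace PrimrecCode

variable {f g : ℕ → OCode}

theorem const (c : OCode) : PrimrecCode (fun _ => c) := Primrec.const _

theorem decodeOC {h : ℕ → ℕ} (hh : Primrec h) : PrimrecCode (fun n => decodeOC (h n)) := by
  simpa [PrimrecCode] using hh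

theorem comp (hf : PrimrecCode f) (hg : PrimrecCode g) : PrimrecCode (fun n => .comp (f n) (g n)) :=
  Primrec.nat_add.comp (Primrec.nat_mul.comp (Primrec.const 4) (Primrec₂.natPair.comp hf hg))
    (Primrec.const 6)

theorem rfind' (hf : PrimrecCode f) : PrimrecCode (fun n => .rfind' (f n)) :=
  Primrec.nat_add.comp (Primrec.nat_mul.comp (Primrec.const 4) hf) (Primrec.const 8)

theorem constO {h : ℕ → ℕ} (hh : Primrec h) : PrimrecCode (fun n => constO (h n)) := by
  have step : Primrec₂ (fun (_ : ℕ) (e : ℕ × ℕ) => 4 * Nat.pair 1 e.2 + 6) :=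
    Primrec.nat_add.comp (Primrec.nat_mul.comp (Primrec.const 4)
      (Primrec₂.natPair.comp (Primrec.const 1) (Primrec.snd.comp Primrec.snd))) (Primrec.const 6)
  refine (Primrec.nat_rec (Primrec.const 0) step).comp Primrec.id hh |>.of_eq fun n => ?_
  show _ = encodeOC (MathiasGenerics.constO (h n))
  generalize h n = k
  induction k with
  | zero => rfl
  | succ k ih => exact congrArg (4 * Nat.pair 1 · + 6) ih

end PrimrecCode

theorem evalo_comp (g : ℕ →. ℕ) (c d : OCode) (n : ℕ) :
    evalo g (.comp c d) n = (evalo g d n).bind fun x => evalo g c x := rfl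

theorem evalo_comp_constO (g : ℕ →. ℕ) (c : OCode) (z n : ℕ) :
    evalo g (.comp c (constO z)) n = evalo g c z := by
  rw [evalo_comp, evalo_constO, Part.bind_some]

/-- Since `comp c (constO z)` ignores its input, running it on its own number decides
whether `c` halts on `z`. -/
theorem encodeOC_comp_constO_mem_jump {A : Set ℕ} {c : OCode} {z : ℕ} :
    encodeOC (.comp c (constO z)) ∈ jump A ↔ (evalo (χp A) c z).Dom := by
  constructor
  · rintro ⟨d, hd, hdom⟩
    obtain rfl := encodeOC_injective hd
    rwa [evalo_comp_constO] at hdom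
  · intro h
    exact ⟨_, rfl, by rwa [evalo_comp_constO]⟩

theorem dom_evalo_rfind' {g : ℕ →. ℕ} {c : OCode} (hc : ∀ n, (evalo g c n).Dom) (a m : ℕ) :
    (evalo g (.rfind' c) (Nat.pair a m)).Dom ↔ ∃ n, 0 ∈ evalo g c (Nat.pair a (n + m)) := by
  simp only [evalo, Nat.unpaired, Nat.unpair_pair, Part.map_Dom]
  refine Nat.rfind_dom.trans ⟨fun ⟨n, hn, _⟩ => ⟨n, ?_⟩, fun ⟨n, hn⟩ => ⟨n, ?_, fun _ => ?_⟩⟩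
  · simpa using hn
  · simpa using hn
  · simpa using hc _

def searchCode (t c : OCode) : OCode :=
  .comp (.rfind' (.comp t (.comp c .right))) (.pair .zero .succ)

theorem PrimrecCode.searchCode (t : OCode) {f : ℕ → OCode} (hf : PrimrecCode f) :
    PrimrecCode (fun n => searchCode t (f n)) :=
  (((const t).comp (hf.comp (const _))).rfind').comp (const _)

theorem dom_evalo_searchCode {g : ℕ →. ℕ} {t c : OCode}
    (ht : ∀ y, evalo g t y = Part.some (if y = 1 then 0 else 1))
    (hc : ∀ x, (evalo g c x).Dom) (k : ℕ) :
    (evalo g (searchCode t c) k).Dom ↔ ∃ x, k < x ∧ evalo g c x = Part.some 1 := by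
  set F : ℕ → ℕ := fun x => (evalo g c x).get (hc x)
  have hF : ∀ x, evalo g c x = Part.some (F x) := fun x => Part.get_eq_iff_eq_some.1 rfl
  have htest : ∀ y, evalo g (.comp t (.comp c .right)) y
      = Part.some (if F y.unpair.2 = 1 then 0 else 1) := fun y => by
    rw [evalo_comp, evalo_comp]
    change ((Part.some y.unpair.2).bind _).bind _ = _
    rw [Part.bind_some, hF, Part.bind_some, ht]
  have hinput : evalo g (.pair .zero .succ) k = Part.some (Nat.pair 0 (k + 1)) := by
    simp [evalo, Seq.seq]
  rw [searchCode, evalo_comp, hinput, Part.bind_some, dom_evalo_rfind' (by simp [htest])]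
  simp only [htest, hF, Nat.unpair_pair, Part.mem_some_iff, Part.some_inj]
  constructor
  · rintro ⟨n, hn⟩
    exact ⟨n + (k + 1), by omega, by simpa using hn⟩
  · rintro ⟨x, hkx, hx⟩
    exact ⟨x - (k + 1), by simp [Nat.sub_add_cancel hkx, hx]⟩

namespace DecidableIn

variable {A B : Set ℕ} {P : ℕ → Prop}

theorem dom_jump {code : ℕ → OCode} (hcode : PrimrecCode code) {input : ℕ → ℕ}
    (hinput : Primrec input) :
    DecidableIn (jump A) (fun n => (evalo (χp A) (code n) (input n)).Dom) :=
  ((decidableIn_mem_iff.2 (TR.refl _)).comp_primrec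
    (hcode.comp (PrimrecCode.constO hinput))).of_iff fun _ => encodeOC_comp_constO_mem_jump

theorem exists_code_dom_iff_exists {P : ℕ → ℕ → Prop}
    (hP : DecidableIn B (fun w => P w.unpair.1 w.unpair.2)) :
    ∃ c : OCode, ∀ p, (evalo (χp B) c p).Dom ↔ ∃ z, P p z := by
  obtain ⟨c, hc⟩ := hP.not
  refine ⟨.comp (.rfind' c) (.pair (.pair .left .right) .zero), fun p => ?_⟩
  have hpair : evalo (χp B) (.pair (.pair .left .right) .zero) p = Part.some (Nat.pair p 0) := by
    simp [evalo, Seq.seq]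
  rw [evalo_comp, hpair, Part.bind_some, dom_evalo_rfind' (fun n => by simp [hc])]
  simp [hc]

theorem exists_code_dom_iff (hP : DecidableIn B P) :
    ∃ c : OCode, ∀ p, (evalo (χp B) c p).Dom ↔ P p := by
  simpa using exists_code_dom_iff_exists (P := fun p _ => P p)
    (hP.comp_primrec (Primrec.fst.comp Primrec.unpair))

theorem ceIn {S : Set ℕ} (hS : DecidableIn B (· ∈ S)) : CeIn B S := by
  obtain ⟨c, hc⟩ := hS.exists_code_dom_iff
  exact ⟨c, Set.ext fun p => (hc p).symm⟩

theorem forall_jump {P : ℕ → ℕ → Prop} (hP : DecidableIn B (fun w => P w.unpair.1 w.unpair.2)) :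
    DecidableIn (jump B) (fun p => ∀ z, P p z) := by
  obtain ⟨c, hc⟩ := exists_code_dom_iff_exists (P := fun p z => ¬ P p z) hP.not
  exact (dom_jump (PrimrecCode.const c) Primrec.id).not.of_iff fun p => by simp [hc]

theorem evalo_eq_jump {code : ℕ → OCode} (hcode : PrimrecCode code)
    {input : ℕ → ℕ} (hinput : Primrec input) (v : ℕ) :
    DecidableIn (jump A) (fun n => evalo (χp A) (code n) (input n) = Part.some v) := by
  obtain ⟨d, hd⟩ := (of_primrecPred (B := A)
    (Primrec.eq.comp Primrec.id (Primrec.const v))).exists_code_dom_iff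
  refine (dom_jump ((PrimrecCode.const d).comp hcode) hinput).of_iff fun n => ?_
  rw [evalo_comp, Part.bind_dom]
  constructor
  · rintro ⟨h, hv⟩
    exact Part.eq_some_iff.2 (((hd _).1 hv) ▸ Part.get_mem h)
  · intro h
    simp [h, hd]

end DecidableIn

theorem tr_jump (A : Set ℕ) : TR A (jump A) := by
  obtain ⟨c, hc⟩ := (decidableIn_mem_iff.2 (TR.refl A)).exists_code_dom_iff
  exact (DecidableIn.dom_jump (PrimrecCode.const c) Primrec.id).of_iff hc

theorem tr_emptyJump_of_le {k m : ℕ} (h : k ≤ m) : TR (emptyJump k) (emptyJump m) := by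
  induction m, h using Nat.le_induction with
  | base => exact TR.refl _
  | succ m _ ih => exact ih.trans (tr_jump _)

/-! ### Coded Mathias conditions -/

theorem forall_mem_raise'_lt_iff (l : List ℕ) (n z : ℕ) :
    (∀ d ∈ Denumerable.raise' l n, d < z) ↔ l = [] ∨ l.sum + n + l.length ≤ z := by
  induction l generalizing n with
  | nil => simp [Denumerable.raise']
  | cons m l ih =>
    simp only [Denumerable.raise', List.forall_mem_cons, ih, List.sum_cons, List.length_cons,
      reduceCtorEq, false_or]
    rcases eq_or_ne l [] with rfl | hl
    · simp
    · simp only [hl, false_or]; omega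

theorem length_raise' (l : List ℕ) (n : ℕ) : (Denumerable.raise' l n).length = l.length := by
  induction l generalizing n with
  | nil => rfl
  | cons m l ih => simp [Denumerable.raise', ih]

theorem condD_eq (p : ℕ) :
    condD p = Denumerable.raise'Finset (Denumerable.ofNat (List ℕ) p.unpair.1) 0 := by
  change Finset.map (Denumerable.eqv ℕ).symm.toEmbedding _ = _
  ext a
  simp [Denumerable.eqv]

theorem condD_pair (D : Finset ℕ) (e : ℕ) :
    condD (Nat.pair (Denumerable.eqv (Finset ℕ) D) e) = D := by
  rw [condD, Nat.unpair_pair]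
  exact Denumerable.ofNat_encode D

def condDCard (p : ℕ) : ℕ := (Denumerable.ofNat (List ℕ) p.unpair.1).length

/-- `max (condD p) + 1`, or `0` if `condD p` is empty: the list decoded from `p.unpair.1` holds the
gaps between consecutive elements of `condD p`. -/
def condDBound (p : ℕ) : ℕ :=
  (Denumerable.ofNat (List ℕ) p.unpair.1).sum + (Denumerable.ofNat (List ℕ) p.unpair.1).length

theorem primrec_condDCard : Primrec condDCard :=
  Primrec.list_length.comp ((Primrec.ofNat (List ℕ)).comp (Primrec.fst.comp Primrec.unpair))

theorem primrec_condDBound : Primrec condDBound := by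
  have hl := (Primrec.ofNat (List ℕ)).comp (Primrec.fst.comp Primrec.unpair)
  have hsum := Primrec.list_foldr hl (Primrec.const 0)
    (Primrec.nat_add.comp (Primrec.fst.comp Primrec.snd) (Primrec.snd.comp Primrec.snd)).to₂
  refine (Primrec.nat_add.comp hsum (Primrec.list_length.comp hl)).of_eq fun p => ?_
  simp [condDBound, List.sum_eq_foldr]

theorem card_condD (p : ℕ) : (condD p).card = condDCard p := by
  rw [condD_eq, condDCard, ← length_raise' _ 0]
  rfl

theorem forall_mem_condD_lt_iff (p z : ℕ) : (∀ d ∈ condD p, d < z) ↔ condDBound p ≤ z := by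
  rw [condD_eq]
  change (∀ d ∈ Denumerable.raise' _ 0, d < z) ↔ _
  rw [forall_mem_raise'_lt_iff, condDBound]
  rcases eq_or_ne (Denumerable.ofNat (List ℕ) p.unpair.1) [] with h | h <;> simp [h]

theorem max'_condD (p : ℕ) (h : (condD p).Nonempty) : (condD p).max' h = condDBound p - 1 := by
  have hle := (forall_mem_condD_lt_iff p ((condD p).max' h + 1)).1 fun d hd =>
    Nat.lt_succ_of_le ((condD p).le_max' d hd)
  have hgt : ¬ condDBound p ≤ (condD p).max' h := fun hb =>
    lt_irrefl _ ((forall_mem_condD_lt_iff p _).2 hb _ ((condD p).max'_mem h))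
  omega

/-- Once `E` is known to be total, "`E` has an element above `z`" is a halting question, so all
three clauses are decidable in `∅′` and `IsCond` becomes `Π⁰₁(∅′)`. -/
def IsCondAt (t : OCode) (p z : ℕ) : Prop :=
  (evalo (χp ∅) (decodeOC p.unpair.2) z = Part.some 0 ∨
      evalo (χp ∅) (decodeOC p.unpair.2) z = Part.some 1) ∧
    (evalo (χp ∅) (decodeOC p.unpair.2) z = Part.some 1 → condDBound p ≤ z) ∧
    (evalo (χp ∅) (searchCode t (decodeOC p.unpair.2)) z).Dom

theorem isCond_iff_forall_isCondAt {t : OCode}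
    (ht : ∀ y, evalo (χp ∅) t y = Part.some (if y = 1 then 0 else 1)) (p : ℕ) :
    IsCond p ↔ ∀ z, IsCondAt t p z := by
  have hdom : condETotal p → ∀ x, (evalo (χp ∅) (decodeOC p.unpair.2) x).Dom := fun htot x => by
    rcases htot x with h | h <;> simp [h]
  constructor
  · rintro ⟨⟨htot, hord⟩, hinf⟩ z
    refine ⟨htot z, fun hz => (forall_mem_condD_lt_iff p z).1 fun d hd => hord d hd z hz, ?_⟩
    obtain ⟨x, hx, hzx⟩ := hinf.exists_gt z
    exact (dom_evalo_searchCode ht (hdom htot) z).2 ⟨x, hzx, hx⟩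
  · intro h
    have htot : condETotal p := fun z => (h z).1
    refine ⟨⟨htot, fun d hd x hx => (forall_mem_condD_lt_iff p x).2 ((h x).2.1 hx) d hd⟩, ?_⟩
    refine Set.infinite_of_forall_exists_gt fun k => ?_
    obtain ⟨x, hkx, hx⟩ := (dom_evalo_searchCode ht (hdom htot) k).1 (h k).2.2
    exact ⟨x, hx, hkx⟩

theorem decidableIn_isCondAt (t : OCode) :
    DecidableIn (jump ∅) (fun w => IsCondAt t w.unpair.1 w.unpair.2) := by
  have hp : Primrec (fun w : ℕ => w.unpair.1) := Primrec.fst.comp Primrec.unpair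
  have hz : Primrec (fun w : ℕ => w.unpair.2) := Primrec.snd.comp Primrec.unpair
  have hE := PrimrecCode.decodeOC (Primrec.snd.comp (Primrec.unpair.comp hp))
  have hbound : DecidableIn (jump ∅) (fun w => condDBound w.unpair.1 ≤ w.unpair.2) :=
    .of_primrecPred (Primrec.nat_le.comp (primrec_condDBound.comp hp) hz)
  exact ((DecidableIn.evalo_eq_jump hE hz 0).or (DecidableIn.evalo_eq_jump hE hz 1)).and
    (((DecidableIn.evalo_eq_jump hE hz 1).imp hbound).and
      (DecidableIn.dom_jump (PrimrecCode.searchCode t hE) hz))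

theorem decidableIn_isCond : DecidableIn (emptyJump 2) IsCond := by
  obtain ⟨t, ht⟩ : FunRecIn ∅ (fun y => if y = 1 then 0 else 1) :=
    .of_primrec (Primrec.ite (Primrec.eq.comp Primrec.id (Primrec.const 1)) (Primrec.const 0)
      (Primrec.const 1))
  exact (DecidableIn.forall_jump (decidableIn_isCondAt t)).of_iff fun p =>
    (isCond_iff_forall_isCondAt ht p).symm

theorem decidableIn_mem_condE {p : ℕ} (hp : condETotal p) : DecidableIn ∅ (· ∈ condE p) :=
  ⟨decodeOC p.unpair.2, fun y => by rcases hp y with h | h <;> simp [condE, h]⟩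

theorem exists_code_condD_condE (D : Finset ℕ) {E : Set ℕ} (hE : DecidableIn ∅ (· ∈ E)) :
    ∃ q, condD q = D ∧ condE q = E ∧ condETotal q := by
  obtain ⟨c, hc⟩ := hE
  refine ⟨_, condD_pair D (encodeOC c), Set.ext fun y => ?_, fun y => ?_⟩ <;>
    by_cases h : y ∈ E <;> simp [condE, hc, h]

theorem exists_ext_insert {p x : ℕ} (hp : IsCond p) (hx : x ∈ condE p) :
    ∃ q, IsCond q ∧ Ext q p ∧ condD q = insert x (condD p) := by
  obtain ⟨⟨htot, hord⟩, hinf⟩ := hp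
  obtain ⟨q, hqD, hqE, hqtot⟩ := exists_code_condD_condE (insert x (condD p))
    ((decidableIn_mem_condE htot).and
      (.of_primrecPred (P := (x < ·)) (Primrec.nat_lt.comp (.const x) .id)))
  refine ⟨q, ⟨⟨hqtot, ?_⟩, ?_⟩, ⟨?_, ?_, ?_⟩, hqD⟩
  · simp only [hqD, hqE, Finset.mem_insert]
    rintro d (rfl | hd) y ⟨hy, hxy⟩
    exacts [hxy, hord d hd y hy]
  · refine Set.infinite_of_forall_exists_gt fun k => ?_
    obtain ⟨y, hy, hky⟩ := hinf.exists_gt (max k x)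
    exact ⟨y, hqE ▸ ⟨hy, by omega⟩, by omega⟩
  · simp [hqD, Finset.subset_insert]
  · intro y hy
    rw [hqD, Finset.coe_insert] at hy
    rcases hy with rfl | hy
    exacts [Or.inr hx, Or.inl hy]
  · rw [hqE]
    exact fun y hy => hy.1

/-! ### Escaping a function -/

def escapeSet (F : ℕ → ℕ) : Set ℕ :=
  {p | IsCond p ∧ ∃ h : (condD p).Nonempty, F ((condD p).card - 1) < (condD p).max' h}

theorem denseCond_escapeSet (F : ℕ → ℕ) : DenseCond (escapeSet F) := by
  intro p hp
  obtain ⟨x, hx, hFx⟩ := hp.2.exists_gt (F (condD p).card)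
  obtain ⟨q, hq, hqp, hqD⟩ := exists_ext_insert hp hx
  have hlt : ∀ d ∈ condD p, d < x := fun d hd => hp.1.2 d hd x hx
  have hne : (condD q).Nonempty := hqD ▸ Finset.insert_nonempty _ _
  have hcard : (condD q).card = (condD p).card + 1 := by
    rw [hqD, Finset.card_insert_of_notMem fun h => lt_irrefl x (hlt x h)]
  have hmax : (condD q).max' hne = x := by
    refine le_antisymm (Finset.max'_le _ _ _ fun d hd => ?_) ((condD q).le_max' x (by simp [hqD]))
    rw [hqD, Finset.mem_insert] at hd
    rcases hd with rfl | hd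
    exacts [le_rfl, (hlt d hd).le]
  exact ⟨q, ⟨hq, hne, by rwa [hcard, Nat.add_sub_cancel, hmax]⟩, hqp⟩

theorem decidableIn_escapeSet {B : Set ℕ} (hB : TR (emptyJump 2) B) {F : ℕ → ℕ}
    (hF : FunRecIn B F) : DecidableIn B (· ∈ escapeSet F) := by
  have hcard : DecidableIn B (fun p => 0 < condDCard p) :=
    .of_primrecPred (Primrec.nat_lt.comp (.const 0) primrec_condDCard)
  have hlt : DecidableIn B (fun p => F (condDCard p - 1) < condDBound p - 1) :=
    .rel Primrec.nat_lt (hF.comp_primrec (Primrec.nat_sub.comp primrec_condDCard (.const 1)))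
      (.of_primrec (Primrec.nat_sub.comp primrec_condDBound (.const 1)))
  refine ((decidableIn_isCond.of_tr hB).and (hcard.and hlt)).of_iff fun p => ?_
  simp only [escapeSet, Set.mem_ofPred_eq, ← card_condD, Finset.card_pos]
  constructor
  · rintro ⟨hp, hne, hlt⟩
    exact ⟨hp, hne, by rwa [max'_condD]⟩
  · rintro ⟨hp, hne, hlt⟩
    exact ⟨hp, hne, by rwa [max'_condD] at hlt⟩

/-- Since `max D < min E`, a set satisfying `(D, E)` agrees with `D` up to `max D`. -/
theorem nth_card_condD_sub_one {G : Set ℕ} {p : ℕ} (hp : IsPreCond p) (hG : Sat G p)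
    (h : (condD p).Nonempty) : Nat.nth (· ∈ G) ((condD p).card - 1) = (condD p).max' h := by
  set x := (condD p).max' h
  have hxD : x ∈ condD p := Finset.max'_mem _ _
  have hfilter : (Finset.range x).filter (· ∈ G) = (condD p).erase x := by
    ext y
    simp only [Finset.mem_filter, Finset.mem_range, Finset.mem_erase]
    constructor
    · rintro ⟨hyx, hyG⟩
      rcases hG.2 hyG with hyD | hyE
      · exact ⟨hyx.ne, hyD⟩
      · exact absurd (hp.2 x hxD y hyE) (not_lt.2 hyx.le)
    · rintro ⟨hyx, hyD⟩
      exact ⟨lt_of_le_of_ne ((condD p).le_max' y hyD) hyx, hG.1 hyD⟩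
  have hcount : Nat.count (· ∈ G) x = (condD p).card - 1 := by
    rw [Nat.count_eq_card_filter_range, hfilter, Finset.card_erase_of_mem hxD]
  rw [← hcount, Nat.nth_count (hG.1 hxD)]

/-- Every weakly Mathias `n`-generic set (`n ≥ 3`) is hyperimmune relative to `∅⁽ⁿ⁻¹⁾`. -/
theorem weakly_generic_hyperimmune (n : ℕ) (hn : 3 ≤ n) (G : Set ℕ)
    (hG : WMGen n G) : HypImmRel G (emptyJump (n - 1)) := by
  have meets : ∀ F, FunRecIn (emptyJump (n - 1)) F → ∃ p ∈ escapeSet F, Sat G p := by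
    intro F hF
    obtain ⟨m, rfl⟩ : ∃ m, n = m + 1 := ⟨n - 1, by omega⟩
    have hsigma : Sigma0 (m + 1) (escapeSet F) :=
      (decidableIn_escapeSet (tr_emptyJump_of_le (by omega)) hF).ceIn
    exact hG _ hsigma (fun _ hp => hp.1) (denseCond_escapeSet F)
  refine ⟨Set.infinite_of_forall_exists_gt fun k => ?_, fun F hF => ?_⟩
  · obtain ⟨p, ⟨-, hne, hk⟩, hsat⟩ := meets (fun _ => k) (.of_primrec (.const k))
    exact ⟨_, hsat.1 (Finset.max'_mem _ hne), hk⟩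
  · obtain ⟨p, ⟨hp, hne, hlt⟩, hsat⟩ := meets F hF
    exact ⟨_, (nth_card_condD_sub_one hp.1 hsat hne).symm ▸ hlt⟩

end MathiasGenerics
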